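/- Let (Ŝ, B̂) be any solution (uniqueness is not required) of the dirty-model program. Then for every (j,k) ∈ Supp(Ŝ) with j ∈ RowSupp(B̂), sign(ŝ_j^(k)) = sign(b̂_j^(k)). -/
import Mathlib


open scoped BigOperators Classical

noncomputable section

/-- The objective of the dirty-model program:
`(1/(2n)) Σ_k ‖y^(k) − X^(k)(s^(k) + b^(k))‖₂² + λ_s ‖S‖_{1,1} + λ_b ‖B‖_{1,∞}`. -/
def dirtyObj (n p r : ℕ) (X : Fin r → Matrix (Fin n) (Fin p) ℝ)
    (y : Fin r → Fin n → ℝ) (lamS lamB : ℝ)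
    (S B : Matrix (Fin p) (Fin r) ℝ) : ℝ :=
  (1 / (2 * (n : ℝ))) *
      ∑ k, ∑ i, (y k i - ∑ j, X k i j * (S j k + B j k)) ^ 2
    + lamS * (∑ j, ∑ k, |S j k|)
    + lamB * (∑ j, ⨆ k, |B j k|)

/-- `(Ŝ, B̂)` is a solution (global minimizer) of the dirty-model program. -/
def IsDirtySol (n p r : ℕ) (X : Fin r → Matrix (Fin n) (Fin p) ℝ)
    (y : Fin r → Fin n → ℝ) (lamS lamB : ℝ)
    (Shat Bhat : Matrix (Fin p) (Fin r) ℝ) : Prop :=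
  ∀ S B : Matrix (Fin p) (Fin r) ℝ,
    dirtyObj n p r X y lamS lamB Shat Bhat ≤ dirtyObj n p r X y lamS lamB S B

/-- For any solution `(Ŝ, B̂)` of the dirty-model program, every entry
`(j,k)` in the support of `Ŝ` whose row `j` is in the row-support of `B̂` satisfies
`sign(ŝ_j^(k)) = sign(b̂_j^(k))`. -/
theorem dirty_model_sign_agreement
    (n p r : ℕ) (hn : 1 ≤ n) (hp : 1 ≤ p) (hr : 1 ≤ r)
    (X : Fin r → Matrix (Fin n) (Fin p) ℝ) (y : Fin r → Fin n → ℝ)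
    (lamS lamB : ℝ) (hlamS : 0 < lamS) (hlamB : 0 < lamB)
    (Shat Bhat : Matrix (Fin p) (Fin r) ℝ)
    (hsol : IsDirtySol n p r X y lamS lamB Shat Bhat)
    (j : Fin p) (k : Fin r)
    (hjk : Shat j k ≠ 0) (hrow : ∃ k', Bhat j k' ≠ 0) :
    Real.sign (Shat j k) = Real.sign (Bhat j k) := by
  classical
  by_contra hne
  haveI : Nonempty (Fin r) := ⟨⟨0, hr⟩⟩
  set s := Shat j k with hs
  set b := Bhat j k with hbdef
  set t := Real.sign s with ht
  have hts : t * |s| = s := by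
    rcases lt_trichotomy s 0 with h | h | h
    · rw [ht, Real.sign_of_neg h, abs_of_neg h]; ring
    · exact absurd h hjk
    · rw [ht, Real.sign_of_pos h, abs_of_pos h]; ring
  have htabs : |t| = 1 := by
    rcases lt_trichotomy s 0 with h | h | h
    · rw [ht, Real.sign_of_neg h]; norm_num
    · exact absurd h hjk
    · rw [ht, Real.sign_of_pos h]; norm_num
  have htt : t * t = 1 := by
    have := sq_abs t
    rw [htabs] at this
    nlinarith
  -- b * t ≤ 0
  have hbt : b * t ≤ 0 := by
    by_contra hpos
    push_neg at hpos
    apply hne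
    rcases lt_trichotomy s 0 with h | h | h
    · have htv : t = -1 := by rw [ht, Real.sign_of_neg h]
      have hbneg : b < 0 := by nlinarith
      rw [ht, Real.sign_of_neg h, Real.sign_of_neg hbneg]
    · exact absurd h hjk
    · have htv : t = 1 := by rw [ht, Real.sign_of_pos h]
      have hbpos : 0 < b := by nlinarith
      rw [ht, Real.sign_of_pos h, Real.sign_of_pos hbpos]
  have hbeq : b = -(|b|) * t := by
    have h1 : |b * t| = |b| := by rw [abs_mul, htabs, mul_one]
    have h2 : |b * t| = -(b * t) := abs_of_nonpos hbt
    have h3 : |b| = -(b * t) := by rw [← h1, h2]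
    linear_combination t * h3 - b * htt
  have hbddB : ∀ (C : Matrix (Fin p) (Fin r) ℝ) (a : Fin p),
      BddAbove (Set.range fun c => |C a c|) := fun C a =>
    Set.Finite.bddAbove (Set.finite_range _)
  set M := ⨆ k', |Bhat j k'| with hM
  obtain ⟨k0, hk0⟩ := hrow
  have hMk : ∀ c, |Bhat j c| ≤ M := fun c => le_ciSup (hbddB Bhat j) c
  have hM0 : 0 < M := lt_of_lt_of_le (abs_pos.2 hk0) (hMk k0)
  set ε := min |s| M with hε
  have hε0 : 0 < ε := lt_min (abs_pos.2 hjk) hM0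
  have hεs : ε ≤ |s| := min_le_left _ _
  have hεM : ε ≤ M := min_le_right _ _
  -- perturbed matrices
  set S' : Matrix (Fin p) (Fin r) ℝ :=
    fun a c => if a = j ∧ c = k then s - t * ε else Shat a c with hS'
  set B' : Matrix (Fin p) (Fin r) ℝ :=
    fun a c => if a = j ∧ c = k then b + t * ε else Bhat a c with hB'
  have hsumeq : ∀ a c, S' a c + B' a c = Shat a c + Bhat a c := by
    intro a c
    by_cases hac : a = j ∧ c = k
    · obtain ⟨h1, h2⟩ := hac
      show (if a = j ∧ c = k then s - t * ε else Shat a c) +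
        (if a = j ∧ c = k then b + t * ε else Bhat a c) = Shat a c + Bhat a c
      rw [if_pos ⟨h1, h2⟩, if_pos ⟨h1, h2⟩, h1, h2, ← hs, ← hbdef]
      ring
    · simp [hS', hB', hac]
  -- the key abs computations
  have habsS : |s - t * ε| = |s| - ε := by
    have h1 : s - t * ε = t * (|s| - ε) := by rw [mul_sub, hts]
    rw [h1, abs_mul, htabs, one_mul, abs_of_nonneg (by linarith)]
  have habsB : |b + t * ε| ≤ M := by
    have h1 : b + t * ε = t * (ε - |b|) := by linear_combination hbeq
    rw [h1, abs_mul, htabs, one_mul]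
    rcases le_total ε |b| with h | h
    · rw [abs_of_nonpos (by linarith)]
      have := hMk k
      simp only [← hbdef] at this
      linarith
    · rw [abs_of_nonneg (by linarith)]
      linarith [abs_nonneg b]
  -- S sum decreases by ε
  have hSsum : (∑ a, ∑ c, |S' a c|) = (∑ a, ∑ c, |Shat a c|) - ε := by
    have hdiff : (∑ a, ∑ c, (|S' a c| - |Shat a c|)) = -ε := by
      rw [Fintype.sum_eq_single j]
      · rw [Fintype.sum_eq_single k]
        · show |S' j k| - |Shat j k| = -ε
          have hv : S' j k = s - t * ε := if_pos ⟨rfl, rfl⟩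
          rw [hv, ← hs, habsS]; ring
        · intro c hc
          simp [hS', hc]
      · intro a ha
        apply Finset.sum_eq_zero
        intro c _
        simp [hS', ha]
    have := Finset.sum_congr rfl (fun a (_ : a ∈ Finset.univ) =>
      (Finset.sum_sub_distrib (s := Finset.univ)
        (f := fun c => |S' a c|) (g := fun c => |Shat a c|)).symm)
    rw [← this, Finset.sum_sub_distrib] at hdiff
    linarith
  -- B sup sum does not increase
  have hBsum : (∑ a, ⨆ c, |B' a c|) ≤ ∑ a, ⨆ c, |Bhat a c| := by
    apply Finset.sum_le_sum
    intro a _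
    by_cases ha : a = j
    · subst ha
      rw [← hM]
      apply ciSup_le
      intro c
      by_cases hc : c = k
      · subst hc
        simpa [hB'] using habsB
      · simp only [hB', hc, and_false, if_false]
        exact hMk c
    · apply ciSup_le
      intro c
      have : B' a c = Bhat a c := by simp [hB', ha]
      rw [this]
      exact le_ciSup (hbddB Bhat a) c
  -- compare objectives
  have hloss : (∑ k', ∑ i, (y k' i - ∑ j', X k' i j' * (S' j' k' + B' j' k')) ^ 2)
      = ∑ k', ∑ i, (y k' i - ∑ j', X k' i j' * (Shat j' k' + Bhat j' k')) ^ 2 := by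
    apply Finset.sum_congr rfl
    intro k' _
    apply Finset.sum_congr rfl
    intro i _
    congr 2
    apply Finset.sum_congr rfl
    intro j' _
    rw [hsumeq]
  have hlt : dirtyObj n p r X y lamS lamB S' B' <
      dirtyObj n p r X y lamS lamB Shat Bhat := by
    unfold dirtyObj
    rw [hloss, hSsum]
    have h1 : lamB * (∑ a, ⨆ c, |B' a c|) ≤ lamB * (∑ a, ⨆ c, |Bhat a c|) :=
      mul_le_mul_of_nonneg_left hBsum (le_of_lt hlamB)
    nlinarith
  exact absurd (hsol S' B') (not_le.2 hlt)
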